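/- arXiv:1309.0342 — 7 statements merged into one kernel-verified Lean document; each statement's English description precedes it below -/
import Mathlib

section
/- Let A be a commutative integral domain and N₀ a finitely generated torsion-free A-module. Then the annihilator of the A-module Ext¹_A(N₀, A) is nonzero; that is, there exists α ∈ A \ {0} such that α·x = 0 for every x ∈ Ext¹_A(N₀, A). -/
open CategoryTheory

section Aux

open Opposite HomologicalComplex Submodule

variable {A : Type} [CommRing A]

lemma stmt2_exists_smul_factor (A : Type) [CommRing A] [IsDomain A]
    (N₀ : Type) [AddCommGroup N₀] [Module A N₀] [Module.Finite A N₀] :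
    ∃ (α : A) (F : Submodule A N₀), α ≠ 0 ∧ Module.Free A F ∧ ∀ x : N₀, α • x ∈ F := by
  classical
  obtain ⟨S, hS⟩ : (⊤ : Submodule A N₀).FG := Module.Finite.fg_top
  set s : S → N₀ := fun i => (i : N₀) with hs
  obtain ⟨I, hind, hmax⟩ := exists_maximal_linearIndepOn A s
  set F : Submodule A N₀ := span A (s '' I) with hF
  have hfree : Module.Free A F := by
    have : Set.range (fun x : I => s x) = s '' I := by
      ext y; simp [Set.image, Set.range]
    exact Module.Free.of_basis ((Module.Basis.span hind).map
      (LinearEquiv.ofEq _ _ (by rw [this])))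
  have h : ∀ i : S, ∃ a : A, a ≠ 0 ∧ a • s i ∈ F := by
    intro i
    by_cases hi : i ∈ I
    · exact ⟨1, one_ne_zero, by simpa using subset_span (Set.mem_image_of_mem s hi)⟩
    · exact hmax i hi
  choose a ha0 haF using h
  refine ⟨∏ i, a i, F, Finset.prod_ne_zero_iff.2 fun i _ => ha0 i, hfree, ?_⟩
  intro x
  have hx : x ∈ span A (S : Set N₀) := by rw [hS]; trivial
  have hle : span A (S : Set N₀) ≤ F.comap (LinearMap.lsmul A N₀ (∏ i, a i)) := by
    rw [span_le]
    rintro y hy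
    simp only [SetLike.mem_coe, mem_comap, LinearMap.lsmul_apply]
    have : (∏ i, a i) • y = (∏ j ∈ Finset.univ.erase ⟨y, hy⟩, a j) • (a ⟨y, hy⟩ • s ⟨y, hy⟩) := by
      rw [← mul_smul, Finset.prod_erase_mul Finset.univ a (Finset.mem_univ _)]
    rw [this]
    exact F.smul_mem _ (haF _)
  simpa using hle hx

lemma stmt2_homologyMap_smul {ι : Type} {c : ComplexShape ι}
    {K L : HomologicalComplex (ModuleCat A) c} (φ : K ⟶ L) (α : A) (i : ι) :
    HomologicalComplex.homologyMap (α • φ) i = α • HomologicalComplex.homologyMap φ i := by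
  have h : (HomologicalComplex.shortComplexFunctor (ModuleCat A) c i).map (α • φ)
      = α • (HomologicalComplex.shortComplexFunctor (ModuleCat A) c i).map φ := by
    ext <;> rfl
  rw [HomologicalComplex.homologyMap, h, ShortComplex.homologyMap_smul]
  rfl

lemma stmt2_yoneda_map_smul_id (M W : ModuleCat A) (α : A) :
    ((linearYoneda A (ModuleCat A)).obj M).map ((α • 𝟙 W).op)
      = α • 𝟙 (((linearYoneda A (ModuleCat A)).obj M).obj (op W)) := by
  apply ModuleCat.hom_ext
  apply LinearMap.ext
  intro h
  change (α • 𝟙 W) ≫ (h : W ⟶ M) = α • (h : W ⟶ M)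
  exact (Linear.smul_comp (r := α) (f := 𝟙 W) (g := (h : W ⟶ M))).trans
    (congrArg (fun g => α • g) (Category.id_comp (h : W ⟶ M)))

lemma stmt2_rightOp_map_smul_id (M W : ModuleCat A) (α : A) :
    ((linearYoneda A (ModuleCat A)).obj M).rightOp.map (α • 𝟙 W)
      = (α • 𝟙 (((linearYoneda A (ModuleCat A)).obj M).obj (op W))).op :=
  congrArg Quiver.Hom.op (stmt2_yoneda_map_smul_id M W α)

lemma stmt2_mapHC_smul_id (M X : ModuleCat A) (α : A) (P : ProjectiveResolution X) :
    ((((linearYoneda A (ModuleCat A)).obj M).rightOp).mapHomologicalComplex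
        (ComplexShape.down ℕ)).map (α • 𝟙 P.complex)
      = (HomologicalComplex.opFunctor _ _).map
          ((α • 𝟙 ((((((linearYoneda A (ModuleCat A)).obj M).rightOp).mapHomologicalComplex
            (ComplexShape.down ℕ)).obj P.complex).unop)).op) := by
  ext i
  exact stmt2_rightOp_map_smul_id M (P.complex.X i) α

lemma stmt2_leftDerived_smul_id_unop (M X : ModuleCat A) (α : A) :
    (((((linearYoneda A (ModuleCat A)).obj M).rightOp).leftDerived 1).map (α • 𝟙 X)).unop
      = α • 𝟙 ((((((linearYoneda A (ModuleCat A)).obj M).rightOp).leftDerived 1).obj X).unop) := by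
  set F := ((linearYoneda A (ModuleCat A)).obj M).rightOp with hFdef
  obtain ⟨P⟩ : Nonempty (ProjectiveResolution X) := HasProjectiveResolution.out
  set J := (((F.mapHomologicalComplex (ComplexShape.down ℕ)).obj P.complex).unop) with hJ
  have w : (α • 𝟙 P.complex) ≫ P.π
      = P.π ≫ (ChainComplex.single₀ (ModuleCat A)).map (α • 𝟙 X) := by
    apply HomologicalComplex.hom_ext
    intro n
    rcases n with _ | n
    · rw [HomologicalComplex.comp_f, HomologicalComplex.comp_f,
        ChainComplex.single₀_map_f_zero, HomologicalComplex.smul_f_apply,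
        HomologicalComplex.id_f, Linear.smul_comp, Category.id_comp]
      erw [Linear.comp_smul, Category.comp_id]
    · exact (HomologicalComplex.isZero_single_obj_X
        (ComplexShape.down ℕ) 0 X (n+1) (by simp)).eq_of_tgt _ _
  have E := Functor.leftDerived_map_eq F 1 (α • 𝟙 X) (α • 𝟙 P.complex) w
  rw [Functor.comp_map, stmt2_mapHC_smul_id M X α P] at E
  have nat := HomologicalComplex.homologyOp_hom_naturality (φ := (α • 𝟙 J)) (i := 1)
  have hψ : HomologicalComplex.homologyMap (α • 𝟙 J) 1 = α • 𝟙 (J.homology 1) := by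
    rw [stmt2_homologyMap_smul, HomologicalComplex.homologyMap_id]
  rw [hψ] at nat
  have nat' : (HomologicalComplex.homologyFunctor (ModuleCat A)ᵒᵖ (ComplexShape.down ℕ) 1).map
        ((HomologicalComplex.opFunctor (ModuleCat A) (ComplexShape.down ℕ).symm).map
          (α • 𝟙 J).op)
      = (J.homologyOp 1).hom ≫ (α • 𝟙 (J.homology 1)).op ≫ (J.homologyOp 1).inv := by
    rw [← Category.assoc, ← nat]
    exact ((Iso.comp_inv_eq _).2 rfl).symm
  erw [nat'] at E
  rw [E]
  set h := P.isoLeftDerivedObj F 1 with hh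
  set o := J.homologyOp 1 with ho
  have key : h.hom ≫ (o.hom ≫ (α • 𝟙 (J.homology 1)).op ≫ o.inv) ≫ h.inv
      = ((o.inv ≫ h.inv).unop ≫ (α • 𝟙 (J.homology 1)) ≫ (h.hom ≫ o.hom).unop).op := by
    simp only [unop_comp, op_comp, Quiver.Hom.op_unop, Category.assoc]
    rfl
  erw [key]
  rw [Quiver.Hom.unop_op, Linear.smul_comp, Category.id_comp, Linear.comp_smul,
    ← unop_comp, show (h.hom ≫ o.hom) ≫ (o.inv ≫ h.inv) = 𝟙 _ from (h ≪≫ o).hom_inv_id, unop_id]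

end Aux

/-- The first Ext module `Ext¹_A(N, A)` of an `A`-module `N` with values in `A`. -/
noncomputable abbrev Ext1 (A : Type) [CommRing A]
    (N : Type) [AddCommGroup N] [Module A N] : ModuleCat A :=
  ((Ext A (ModuleCat A) 1).obj (Opposite.op (ModuleCat.of A N))).obj (ModuleCat.of A A)

/-- For a finitely generated torsion-free module `N₀` over a commutative
integral domain `A`, the annihilator of `Ext¹_A(N₀, A)` is nonzero: there is a nonzero
`α ∈ A` annihilating every element of `Ext¹_A(N₀, A)`. -/
theorem stmt2 (A : Type) [CommRing A] [IsDomain A]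
    (N₀ : Type) [AddCommGroup N₀] [Module A N₀] [Module.Finite A N₀]
    (htf : ∀ (a : A) (m : N₀), a • m = 0 → a = 0 ∨ m = 0) :
    ∃ α : A, α ≠ 0 ∧ ∀ x : Ext1 A N₀, α • x = 0 := by
  classical
  obtain ⟨α, F, hα, hfree, hsub⟩ := stmt2_exists_smul_factor A N₀
  refine ⟨α, hα, ?_⟩
  intro x
  set X : ModuleCat A := ModuleCat.of A N₀ with hX
  set M : ModuleCat A := ModuleCat.of A A with hM
  set Y : ModuleCat A := ModuleCat.of A F with hY
  let i : Y ⟶ X := ModuleCat.ofHom F.subtype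
  let f : X ⟶ Y := ModuleCat.ofHom (LinearMap.codRestrict F (α • LinearMap.id) hsub)
  have hfact : f ≫ i = α • 𝟙 X := by
    apply ModuleCat.hom_ext
    apply LinearMap.ext
    intro y
    rfl
  haveI : Module.Free A F := hfree
  haveI : Projective Y := ModuleCat.projective_of_free (Module.Free.chooseBasis A ↥F)
  have hz : Limits.IsZero (((Ext A (ModuleCat A) 1).obj (Opposite.op Y)).obj M) :=
    isZero_Ext_succ_of_projective Y M 0
  have h0 : ((Ext A (ModuleCat A) 1).map ((α • 𝟙 X)).op).app M = 0 := by
    rw [← hfact, show (f ≫ i).op = i.op ≫ f.op from rfl, Functor.map_comp,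
      NatTrans.comp_app, hz.eq_of_src (((Ext A (ModuleCat A) 1).map f.op).app M) 0, Limits.comp_zero]
  have hsmul : (((Ext A (ModuleCat A) 1).map ((α • 𝟙 X)).op).app M) x = α • x := by
    rw [show ((Ext A (ModuleCat A) 1).map ((α • 𝟙 X)).op).app M
        = (((((linearYoneda A (ModuleCat A)).obj M).rightOp).leftDerived 1).map (α • 𝟙 X)).unop
        from rfl,
      stmt2_leftDerived_smul_id_unop M X α]
    rfl
  rw [← hsmul, h0]
  rfl
end

section
/- Let A be a commutative integral domain and N an A-module such that both N and its torsion submodule Tors(N) are finitely generated. Then the annihilator ideal Ann(Ext¹_A(N, A)) is nonzero; in particular Ext¹_A(N, A) is a torsion A-module. -/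
open CategoryTheory

theorem ext1_smul_eq_zero (A : Type) [CommRing A]
    (N : Type) [AddCommGroup N] [Module A N] (α : A)
    (F : Type) [AddCommGroup F] [Module A F] [Module.Projective A F]
    (f : N →ₗ[A] F) (g : F →ₗ[A] N) (hfg : ∀ n : N, g (f n) = α • n)
    (x : Ext1 A N) : α • x = 0 := by
  obtain ⟨P⟩ : Nonempty (ProjectiveResolution (ModuleCat.of A N)) :=
    HasProjectiveResolution.out
  have hsurj : Function.Surjective (P.π.f 0) := by
    rw [← ModuleCat.epi_iff_surjective]; infer_instance
  have h0 := (ShortComplex.moduleCat_exact_iff _).mp P.exact₀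
  have h1 := (ShortComplex.moduleCat_exact_iff _).mp (P.exact_succ 0)
  set πL : ↑(P.complex.X 0) →ₗ[A] N := (P.π.f 0).hom with hπL
  set d1 : ↑(P.complex.X 1) →ₗ[A] ↑(P.complex.X 0) := (P.complex.d 1 0).hom with hd1
  set d2 : ↑(P.complex.X 2) →ₗ[A] ↑(P.complex.X 1) := (P.complex.d 2 1).hom with hd2
  have hdπ : ∀ x1, πL (d1 x1) = 0 := by
    intro x1
    have := P.complex_d_comp_π_f_zero
    exact congrArg (fun (h : P.complex.X 1 ⟶ ModuleCat.of A N) =>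
      h.hom x1) this
  -- key sublemma
  have hkey : ∀ (φ : ↑(P.complex.X 1) →ₗ[A] A), (∀ y, φ (d2 y) = 0) →
      ∃ ψ : ↑(P.complex.X 0) →ₗ[A] A, ∀ x1, ψ (d1 x1) = α • φ x1 := by
    intro φ hφ
    obtain ⟨gl, hg⟩ := Module.projective_lifting_property πL g hsurj
    have hgap : ∀ w, πL (gl w) = g w := fun w => LinearMap.congr_fun hg w
    have hker : LinearMap.ker d1 ≤ LinearMap.ker φ := by
      intro x hx
      obtain ⟨y, hy⟩ := h1 x hx
      simp only [LinearMap.mem_ker]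
      rw [← hy]; exact hφ y
    set φbar := (LinearMap.ker d1).liftQ φ hker with hφbar
    set eqv := d1.quotKerEquivRange with heqv
    set φ' : ↥(LinearMap.range d1) →ₗ[A] A := φbar ∘ₗ (eqv.symm : _ ≃ₗ[A] _) with hφ'def
    have hφ' : ∀ x1, φ' ⟨d1 x1, LinearMap.mem_range_self _ x1⟩ = φ x1 := by
      intro x1
      have h1' : eqv.symm ⟨d1 x1, LinearMap.mem_range_self _ x1⟩ =
          Submodule.Quotient.mk x1 := by
        rw [LinearEquiv.symm_apply_eq, heqv]
        exact Subtype.ext (d1.quotKerEquivRange_apply_mk x1).symm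
      simp [hφ'def, h1', hφbar]
    set hmap : ↑(P.complex.X 0) →ₗ[A] ↑(P.complex.X 0) :=
      α • LinearMap.id - gl ∘ₗ f ∘ₗ πL with hhmap
    have hcod : ∀ x0, hmap x0 ∈ LinearMap.range d1 := by
      intro x0
      have : πL (hmap x0) = 0 := by
        simp [hhmap, hgap, hfg, sub_eq_zero]
      obtain ⟨y, hy⟩ := h0 (hmap x0) this
      exact ⟨y, hy⟩
    refine ⟨φ' ∘ₗ LinearMap.codRestrict _ hmap hcod, ?_⟩
    intro x1
    have h2 : hmap (d1 x1) = d1 (α • x1) := by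
      simp [hhmap, hdπ, map_smul]
    have h3 : (LinearMap.codRestrict _ hmap hcod) (d1 x1) =
        ⟨d1 (α • x1), LinearMap.mem_range_self _ _⟩ := Subtype.ext h2
    calc (φ' ∘ₗ LinearMap.codRestrict _ hmap hcod) (d1 x1)
        = φ' ⟨d1 (α • x1), LinearMap.mem_range_self _ _⟩ := by
          rw [LinearMap.comp_apply, h3]
      _ = φ (α • x1) := hφ' (α • x1)
      _ = α • φ x1 := map_smul φ α x1
  -- homology identification
  have e : Ext1 A N ≅
      ((P.complex.linearYonedaObj A (ModuleCat.of A A)).sc' 0 1 2).moduleCatLeftHomologyData.H :=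
    P.isoExt 1 (ModuleCat.of A A) ≪≫
      (P.complex.linearYonedaObj A (ModuleCat.of A A)).homologyIsoSc' 0 1 2
        (by simp) (by simp) ≪≫
      ((P.complex.linearYonedaObj A (ModuleCat.of A A)).sc' 0 1 2).moduleCatHomologyIso
  suffices h : α • e.hom x = 0 by
    have h2 : e.hom (α • x) = 0 := by rw [map_smul]; exact h
    calc α • x = e.inv (e.hom (α • x)) := (e.hom_inv_id_apply _).symm
    _ = e.inv 0 := by rw [h2]
    _ = 0 := map_zero _
  obtain ⟨z, hz⟩ := Submodule.Quotient.mk_surjective _ (e.hom x)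
  rw [← hz]
  show (Submodule.Quotient.mk (α • z) : _ ⧸ LinearMap.range _) = 0
  rw [Submodule.Quotient.mk_eq_zero]
  have hφ : ∀ y, (z.1 : P.complex.X 1 ⟶ ModuleCat.of A A).hom (d2 y) = 0 := by
    intro y
    have hz2 : ((P.complex.linearYonedaObj A (ModuleCat.of A A)).sc' 0 1 2).g.hom z.1 = 0 := z.2
    exact congrArg (fun (h : P.complex.X 2 ⟶ ModuleCat.of A A) =>
      h.hom y) hz2
  obtain ⟨ψ, hψ⟩ := hkey (z.1 : P.complex.X 1 ⟶ ModuleCat.of A A).hom hφ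
  have t1 : ((α • z).1 : P.complex.X 1 ⟶ ModuleCat.of A A).hom = α • (z.1 : P.complex.X 1 ⟶ ModuleCat.of A A).hom := rfl
  have main : ModuleCat.Hom.hom (
      (((P.complex.linearYonedaObj A (ModuleCat.of A A)).sc' 0 1 2).moduleCatToCycles
        (ModuleCat.ofHom ψ)).1)
      = α • (z.1 : P.complex.X 1 ⟶ ModuleCat.of A A).hom := by
    apply LinearMap.ext
    intro x1
    have t2 : ModuleCat.Hom.hom (
        (((P.complex.linearYonedaObj A (ModuleCat.of A A)).sc' 0 1 2).moduleCatToCycles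
          (ModuleCat.ofHom ψ)).1) x1
        = ψ (d1 x1) := rfl
    rw [t2, hψ x1, LinearMap.smul_apply]
  exact ⟨(ModuleCat.ofHom ψ), Subtype.ext (ModuleCat.hom_ext (main.trans t1.symm))⟩

theorem exists_factorization (A : Type) [CommRing A] [IsDomain A]
    (N : Type) [AddCommGroup N] [Module A N] [Module.Finite A N] :
    ∃ (α : A), α ≠ 0 ∧ ∃ (F : Submodule A N) (f : N →ₗ[A] ↥F),
      Module.Projective A ↥F ∧ ∀ n : N, (F.subtype (f n) : N) = α • n := by
  classical
  obtain ⟨s, hs⟩ := Module.Finite.fg_top (R := A) (M := N)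
  set ι := {x : N // x ∈ s} with hι
  set v : ι → N := Subtype.val with hv
  obtain ⟨I, hIli, hImax⟩ := exists_maximal_linearIndepOn A v
  have ha : ∀ i : ι, ∃ a : A, a ≠ 0 ∧ a • v i ∈ Submodule.span A (v '' I) := by
    intro i
    by_cases hi : i ∈ I
    · exact ⟨1, one_ne_zero, by
        rw [one_smul]; exact Submodule.subset_span ⟨i, hi, rfl⟩⟩
    · exact hImax i hi
  choose a ha0 haF using ha
  set α : A := ∏ i : ι, a i with hα
  have hαne : α ≠ 0 := Finset.prod_ne_zero_iff.mpr fun i _ => ha0 i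
  set F : Submodule A N := Submodule.span A (Set.range fun x : I => v x) with hF
  have hFI : F = Submodule.span A (v '' I) := by
    rw [hF, ← Set.image_eq_range]
  have hQ : ∀ n : N, α • n ∈ F := by
    intro n
    have hn : n ∈ Submodule.span A (Set.range v) := by
      have : Set.range v = (s : Set N) := Subtype.range_val
      rw [this, hs]
      trivial
    induction hn using Submodule.span_induction with
    | mem x hx =>
      obtain ⟨i, rfl⟩ := hx
      rw [hFI]
      have hsplit : α = (∏ j ∈ Finset.univ.erase i, a j) * a i := by
        rw [hα, ← Finset.prod_erase_mul _ _ (Finset.mem_univ i)]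
      rw [hsplit, mul_smul]
      exact Submodule.smul_mem _ _ (haF i)
    | zero => simp
    | add x y hx hy ihx ihy => rw [smul_add]; exact F.add_mem ihx ihy
    | smul c x hx ih => rw [smul_comm]; exact F.smul_mem c ih
  have hfree : Module.Free A ↥F := Module.Free.of_basis (Module.Basis.span hIli)
  have hproj : Module.Projective A ↥F := Module.Projective.of_free
  refine ⟨α, hαne, F, LinearMap.codRestrict F (α • LinearMap.id) (fun n => hQ n), hproj, ?_⟩
  intro n
  rfl


/-- If `N` and its torsion submodule `Tors(N)` are finitely generated over a
commutative integral domain `A`, then `Ann(Ext¹_A(N, A)) ≠ 0`; in particular `Ext¹_A(N, A)`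
is a torsion `A`-module. -/
theorem stmt3 (A : Type) [CommRing A] [IsDomain A]
    (N : Type) [AddCommGroup N] [Module A N] [Module.Finite A N]
    (htors : (Submodule.torsion A N).FG) :
    (∃ α : A, α ≠ 0 ∧ ∀ x : Ext1 A N, α • x = 0) ∧
      (∀ x : Ext1 A N, ∃ α : A, α ≠ 0 ∧ α • x = 0) := by
  obtain ⟨α, hα, F, f, hproj, hfg⟩ := exists_factorization A N
  have hkill : ∀ x : Ext1 A N, α • x = 0 := fun x =>
    ext1_smul_eq_zero A N α ↥F f F.subtype hfg x
  exact ⟨⟨α, hα, hkill⟩, fun x => ⟨α, hα, hkill x⟩⟩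
end

section
/- Let A be a commutative integral domain and N an A-module such that both N and its torsion submodule Tors(N) are finitely generated. Then there exists α₀ ∈ A \ {0} such that the quotient of Hom_A(N, A/α₀A) by the image of the natural map Hom_A(N, A) → Hom_A(N, A/α₀A) is isomorphic, as an A-module, to Ext¹_A(N, A). -/
open CategoryTheory

set_option linter.unusedSectionVars false
set_option maxHeartbeats 1000000

open LinearMap Function

namespace Stmt4Aux

variable {A : Type} [CommRing A]

section Div
variable {M : Type*} [AddCommGroup M] [Module A M]

noncomputable def divBy [IsDomain A] {c : A} (hc : c ≠ 0) (w : M →ₗ[A] A)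
    (hw : ∀ x, w x ∈ Ideal.span {c}) : M →ₗ[A] A where
  toFun x := (Ideal.mem_span_singleton'.mp (hw x)).choose
  map_add' x y := by
    apply mul_right_cancel₀ hc
    rw [add_mul, (Ideal.mem_span_singleton'.mp (hw x)).choose_spec,
      (Ideal.mem_span_singleton'.mp (hw y)).choose_spec,
      (Ideal.mem_span_singleton'.mp (hw (x + y))).choose_spec, map_add]
  map_smul' r x := by
    apply mul_right_cancel₀ hc
    rw [smul_eq_mul, RingHom.id_apply, mul_assoc,
      (Ideal.mem_span_singleton'.mp (hw x)).choose_spec,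
      (Ideal.mem_span_singleton'.mp (hw (r • x))).choose_spec, map_smul, smul_eq_mul]

lemma divBy_spec [IsDomain A] {c : A} (hc : c ≠ 0) (w : M →ₗ[A] A)
    (hw : ∀ x, w x ∈ Ideal.span {c}) (x : M) : c * divBy hc w hw x = w x := by
  rw [mul_comm]
  exact (Ideal.mem_span_singleton'.mp (hw x)).choose_spec

lemma divBy_unique [IsDomain A] {c : A} (hc : c ≠ 0) (w : M →ₗ[A] A)
    (hw : ∀ x, w x ∈ Ideal.span {c}) (v : M →ₗ[A] A) (hv : ∀ x, c * v x = w x) :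
    v = divBy hc w hw := by
  ext x
  exact mul_left_cancel₀ hc ((hv x).trans (divBy_spec hc w hw x).symm)

end Div

section Descend
variable {F N M : Type*} [AddCommGroup F] [Module A F] [AddCommGroup N] [Module A N]
  [AddCommGroup M] [Module A M]

lemma descend (p : F →ₗ[A] N) (hp : Surjective p) (q : F →ₗ[A] M)
    (hq : ker p ≤ ker q) : ∃ f : N →ₗ[A] M, f ∘ₗ p = q := by
  refine ⟨((ker p).liftQ q hq) ∘ₗ (p.quotKerEquivOfSurjective hp).symm.toLinearMap, ?_⟩
  ext x
  have h1 : (p.quotKerEquivOfSurjective hp).symm (p x) = Submodule.Quotient.mk x := by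
    rw [LinearEquiv.symm_apply_eq]; rfl
  simp only [LinearMap.coe_comp, Function.comp_apply, LinearEquiv.coe_coe, h1]
  rfl

end Descend

section Bridge

variable [IsDomain A]
variable {F N : Type*} [AddCommGroup F] [Module A F] [AddCommGroup N] [Module A N]
variable [Module.Projective A F]

/-- Restriction of functionals to the kernel of `p`. -/
noncomputable abbrev resK (p : F →ₗ[A] N) : (F →ₗ[A] A) →ₗ[A] (ker p →ₗ[A] A) :=
  LinearMap.lcomp A A (ker p).subtype

lemma resK_apply (p : F →ₗ[A] N) (g : F →ₗ[A] A) (x : ker p) : resK p g x = g x := rfl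

/-- A lift of `f ∘ p` through the quotient map `A → A ⧸ (c)`. -/
noncomputable def lift0 (p : F →ₗ[A] N) (c : A) (f : N →ₗ[A] A ⧸ Ideal.span {c}) :
    F →ₗ[A] A :=
  (Module.projective_lifting_property (Ideal.span {c}).mkQ (f ∘ₗ p)
    (Submodule.mkQ_surjective _)).choose

lemma lift0_spec (p : F →ₗ[A] N) (c : A) (f : N →ₗ[A] A ⧸ Ideal.span {c}) :
    (Ideal.span {c}).mkQ ∘ₗ lift0 p c f = f ∘ₗ p :=
  (Module.projective_lifting_property (Ideal.span {c}).mkQ (f ∘ₗ p)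
    (Submodule.mkQ_surjective _)).choose_spec

lemma lift_vals (p : F →ₗ[A] N) {c : A} {f : N →ₗ[A] A ⧸ Ideal.span {c}} {g : F →ₗ[A] A}
    (hg : (Ideal.span {c}).mkQ ∘ₗ g = f ∘ₗ p) (x : ker p) : resK p g x ∈ Ideal.span {c} := by
  have h1 : (Ideal.span {c}).mkQ (g x) = f (p x) := LinearMap.congr_fun hg x
  rw [mem_ker.mp x.2, map_zero] at h1
  rw [resK_apply]
  exact (Submodule.Quotient.mk_eq_zero _).mp h1

/-- The connecting map `Hom(N, A/(c)) → Hom(ker p, A) ⧸ restrictions`. -/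
noncomputable def theta0 (p : F →ₗ[A] N) {c : A} (hc : c ≠ 0)
    (f : N →ₗ[A] A ⧸ Ideal.span {c}) : (ker p →ₗ[A] A) ⧸ LinearMap.range (resK p) :=
  Submodule.Quotient.mk (divBy hc (resK p (lift0 p c f)) (lift_vals p (lift0_spec p c f)))

lemma theta0_eq (p : F →ₗ[A] N) {c : A} (hc : c ≠ 0) (f : N →ₗ[A] A ⧸ Ideal.span {c})
    (g : F →ₗ[A] A) (hg : (Ideal.span {c}).mkQ ∘ₗ g = f ∘ₗ p) :
    theta0 p hc f = Submodule.Quotient.mk (divBy hc (resK p g) (lift_vals p hg)) := by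
  set g₀ := lift0 p c f with hg₀def
  have hg₀ : (Ideal.span {c}).mkQ ∘ₗ g₀ = f ∘ₗ p := lift0_spec p c f
  have hwF : ∀ x : F, (g₀ - g) x ∈ Ideal.span {c} := by
    intro x
    have h1 : (Ideal.span {c}).mkQ (g₀ x) = f (p x) := LinearMap.congr_fun hg₀ x
    have h2 : (Ideal.span {c}).mkQ (g x) = f (p x) := LinearMap.congr_fun hg x
    have : (Ideal.span {c}).mkQ ((g₀ - g) x) = 0 := by
      rw [LinearMap.sub_apply, map_sub, h1, h2, sub_self]
    exact (Submodule.Quotient.mk_eq_zero _).mp this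
  have key : divBy hc (resK p g₀) (lift_vals p hg₀) =
      divBy hc (resK p g) (lift_vals p hg) + resK p (divBy hc (g₀ - g) hwF) := by
    rw [eq_comm]
    apply divBy_unique
    intro x
    simp only [LinearMap.add_apply, mul_add, resK_apply, divBy_spec, LinearMap.sub_apply]
    ring
  show Submodule.Quotient.mk (divBy hc (resK p g₀) (lift_vals p hg₀)) = _
  rw [key, Submodule.Quotient.eq]
  simp only [add_sub_cancel_left]
  exact ⟨divBy hc (g₀ - g) hwF, rfl⟩

/-- The connecting map, as a linear map. -/
noncomputable def theta (p : F →ₗ[A] N) {c : A} (hc : c ≠ 0) :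
    (N →ₗ[A] A ⧸ Ideal.span {c}) →ₗ[A]
      ((ker p →ₗ[A] A) ⧸ LinearMap.range (resK p)) where
  toFun := theta0 p hc
  map_add' f₁ f₂ := by
    have hg : (Ideal.span {c}).mkQ ∘ₗ (lift0 p c f₁ + lift0 p c f₂) = (f₁ + f₂) ∘ₗ p := by
      rw [comp_add, lift0_spec, lift0_spec, add_comp]
    rw [theta0_eq p hc (f₁ + f₂) _ hg, theta0_eq p hc f₁ _ (lift0_spec p c f₁),
      theta0_eq p hc f₂ _ (lift0_spec p c f₂), ← Submodule.Quotient.mk_add]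
    congr 1
    rw [eq_comm]
    apply divBy_unique
    intro x
    rw [LinearMap.add_apply, mul_add, divBy_spec, divBy_spec]
    simp only [map_add, LinearMap.add_apply]
  map_smul' r f := by
    have hgr : (Ideal.span {c}).mkQ ∘ₗ (r • lift0 p c f) = (r • f) ∘ₗ p := by
      rw [comp_smul, lift0_spec, smul_comp]
    rw [RingHom.id_apply]
    show theta0 p hc (r • f) = r • theta0 p hc f
    rw [theta0_eq p hc (r • f) _ hgr, theta0_eq p hc f _ (lift0_spec p c f),
      ← Submodule.Quotient.mk_smul]
    congr 1
    rw [eq_comm]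
    apply divBy_unique
    intro x
    rw [LinearMap.smul_apply, smul_eq_mul, mul_left_comm, divBy_spec]
    simp only [map_smul, LinearMap.smul_apply, smul_eq_mul]

lemma theta_surjective (p : F →ₗ[A] N) (hp : Surjective p) {c : A} (hc : c ≠ 0)
    (hext : ∀ u : ker p →ₗ[A] A, ∃ g : F →ₗ[A] A, ∀ x : ker p, g x = c * u x) :
    Surjective (theta p hc) := by
  intro y
  obtain ⟨u, rfl⟩ := Submodule.Quotient.mk_surjective _ y
  obtain ⟨g, hg⟩ := hext u
  have hker : ker p ≤ ker ((Ideal.span {c}).mkQ ∘ₗ g) := by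
    intro x hx
    rw [mem_ker, LinearMap.comp_apply, Submodule.mkQ_apply, Submodule.Quotient.mk_eq_zero, hg ⟨x, hx⟩]
    exact Ideal.mul_mem_right _ _ (Ideal.subset_span rfl)
  obtain ⟨f, hf⟩ := descend p hp ((Ideal.span {c}).mkQ ∘ₗ g) hker
  refine ⟨f, ?_⟩
  show theta0 p hc f = _
  rw [theta0_eq p hc f g hf.symm]
  congr 1
  rw [eq_comm]
  apply divBy_unique
  intro x
  rw [resK_apply, hg x]

lemma theta_ker (p : F →ₗ[A] N) (hp : Surjective p) {c : A} (hc : c ≠ 0) :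
    ker (theta p hc) =
      LinearMap.range (LinearMap.llcomp A N A (A ⧸ Ideal.span {c}) (Ideal.span {c}).mkQ
        : (N →ₗ[A] A) →ₗ[A] N →ₗ[A] A ⧸ Ideal.span {c}) := by
  ext f
  constructor
  · intro hf
    have hg : (Ideal.span {c}).mkQ ∘ₗ lift0 p c f = f ∘ₗ p := lift0_spec p c f
    set g := lift0 p c f with hgdef
    rw [mem_ker] at hf
    have hf' : theta0 p hc f = 0 := hf
    rw [theta0_eq p hc f g hg, Submodule.Quotient.mk_eq_zero] at hf'
    obtain ⟨h, hh⟩ := LinearMap.mem_range.mp hf'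
    have hkerg : ker p ≤ ker (g - c • h) := by
      intro x hx
      rw [mem_ker, LinearMap.sub_apply, LinearMap.smul_apply, smul_eq_mul, sub_eq_zero]
      have h2 : resK p h ⟨x, hx⟩ = divBy hc (resK p g) (lift_vals p hg) ⟨x, hx⟩ := by rw [hh]
      rw [resK_apply] at h2
      calc g x = c * divBy hc (resK p g) (lift_vals p hg) ⟨x, hx⟩ :=
            (divBy_spec hc _ (lift_vals p hg) (⟨x, hx⟩ : ker p)).symm
      _ = c * h x := by rw [← h2]
    obtain ⟨f₀, hf₀⟩ := descend p hp (g - c • h) hkerg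
    rw [LinearMap.mem_range]
    refine ⟨f₀, ?_⟩
    have heq : (LinearMap.llcomp A N A (A ⧸ Ideal.span {c}) (Ideal.span {c}).mkQ) f₀ =
        (Ideal.span {c}).mkQ ∘ₗ f₀ := rfl
    rw [heq]
    have hzero : (Ideal.span {c}).mkQ.comp (c • h) = 0 := by
      ext x
      simp only [LinearMap.coe_comp, Function.comp_apply, LinearMap.smul_apply, smul_eq_mul,
        Submodule.mkQ_apply, LinearMap.zero_apply, Submodule.Quotient.mk_eq_zero]
      exact Ideal.mul_mem_right _ _ (Ideal.subset_span rfl)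
    have hcomp : ((Ideal.span {c}).mkQ ∘ₗ f₀) ∘ₗ p = f ∘ₗ p := by
      rw [LinearMap.comp_assoc, hf₀, LinearMap.comp_sub, hg, hzero, sub_zero]
    ext y
    obtain ⟨x, rfl⟩ := hp y
    exact LinearMap.congr_fun hcomp x
  · rintro ⟨f₀, rfl⟩
    have hg : (Ideal.span {c}).mkQ ∘ₗ (f₀ ∘ₗ p) =
        ((LinearMap.llcomp A N A (A ⧸ Ideal.span {c}) (Ideal.span {c}).mkQ) f₀) ∘ₗ p := rfl
    rw [mem_ker]
    show theta0 p hc _ = 0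
    rw [theta0_eq p hc _ _ hg, Submodule.Quotient.mk_eq_zero]
    have hdz : divBy hc (resK p (f₀ ∘ₗ p)) (lift_vals p hg) = 0 := by
      rw [eq_comm]
      apply divBy_unique
      intro x
      rw [LinearMap.zero_apply, mul_zero, resK_apply, LinearMap.comp_apply, mem_ker.mp x.2, map_zero]
    rw [hdz]
    exact Submodule.zero_mem _

theorem bridge (p : F →ₗ[A] N) (hp : Surjective p) {c : A} (hc : c ≠ 0)
    (hext : ∀ u : ker p →ₗ[A] A, ∃ g : F →ₗ[A] A, ∀ x : ker p, g x = c * u x) :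
    Nonempty
      (((N →ₗ[A] A ⧸ Ideal.span {c}) ⧸
          LinearMap.range (LinearMap.llcomp A N A (A ⧸ Ideal.span {c}) (Ideal.span {c}).mkQ
            : (N →ₗ[A] A) →ₗ[A] N →ₗ[A] A ⧸ Ideal.span {c}))
        ≃ₗ[A]
        ((ker p →ₗ[A] A) ⧸ LinearMap.range (resK p))) :=
  ⟨(Submodule.quotEquivOfEq _ _ (theta_ker p hp hc).symm).trans
    ((theta p hc).quotKerEquivOfSurjective (theta_surjective p hp hc hext))⟩

end Bridge

section BoundSection


variable [IsDomain A]
variable {F N : Type*} [AddCommGroup F] [Module A F] [AddCommGroup N] [Module A N]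

/-- Over a domain, for a f.g. module `N` and surjection `p : F → N`, there is `c ≠ 0` such
that `c` times any functional on `ker p` extends to `F`. -/
theorem exists_bound [Module.Finite A N] (p : F →ₗ[A] N) (hp : Surjective p) :
    ∃ c : A, c ≠ 0 ∧ ∀ u : ker p →ₗ[A] A, ∃ g : F →ₗ[A] A,
      ∀ x : ker p, g x = c * u x := by
  classical
  obtain ⟨n, s, hs⟩ := Module.Finite.exists_fin (R := A) (M := N)
  obtain ⟨I, hindep, hIa⟩ := exists_maximal_linearIndepOn A s
  -- the free submodule
  set N' : Submodule A N := Submodule.span A (s '' I) with hN'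
  have hmem : ∀ i : Fin n, ∃ a : A, a ≠ 0 ∧ a • s i ∈ N' := by
    intro i
    by_cases hi : i ∈ I
    · exact ⟨1, one_ne_zero, by
        rw [one_smul]; exact Submodule.subset_span ⟨i, hi, rfl⟩⟩
    · exact hIa i hi
  choose a ha hamem using hmem
  refine ⟨∏ i, a i, Finset.prod_ne_zero_iff.mpr fun i _ => ha i, ?_⟩
  set c : A := ∏ i, a i with hcdef
  -- c • N ⊆ N'
  have hcN : ∀ x : N, c • x ∈ N' := by
    intro x
    have hx : x ∈ Submodule.span A (Set.range s) := hs ▸ Submodule.mem_top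
    induction hx using Submodule.span_induction with
    | mem x hxm =>
      obtain ⟨i, rfl⟩ := hxm
      have : c = (∏ j ∈ Finset.univ.erase i, a j) * a i := by
        rw [hcdef, ← Finset.prod_erase_mul Finset.univ a (Finset.mem_univ i)]
      rw [this, mul_smul]
      exact Submodule.smul_mem _ _ (hamem i)
    | zero => simp
    | add x y _ _ hx hy => rw [smul_add]; exact Submodule.add_mem _ hx hy
    | smul r x _ hx => rw [smul_comm]; exact Submodule.smul_mem _ _ hx
  -- N' is projective (it is free with basis s|I)
  have himg : s '' I = Set.range fun i : I => s i := by
    ext x; simp [Set.image, Set.range]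
  have hproj : Module.Projective A N' := by
    refine Module.Projective.of_basis (ι := I) ?_
    rw [hN', himg]
    exact Module.Basis.span hindep
  -- lift the inclusion N' → N through p
  obtain ⟨lam, hlam⟩ := Module.projective_lifting_property p N'.subtype hp
  -- the map m : F → N', x ↦ c • p x
  set m : F →ₗ[A] N' := LinearMap.codRestrict N' (c • p) fun x => hcN (p x) with hm
  set σ : F →ₗ[A] F := c • LinearMap.id - lam ∘ₗ m with hσ
  have hσker : ∀ x : F, σ x ∈ ker p := by
    intro x
    rw [mem_ker, hσ]
    simp only [LinearMap.sub_apply, LinearMap.smul_apply, LinearMap.id_apply, LinearMap.coe_comp, Function.comp_apply, map_sub, map_smul]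
    have : p (lam (m x)) = N'.subtype (m x) := by rw [← hlam]; rfl
    rw [this]
    have : (N'.subtype) (m x) = c • p x := rfl
    rw [this, sub_self]
  have hσfix : ∀ x : F, x ∈ ker p → σ x = c • x := by
    intro x hx
    have hm0 : m x = 0 := by
      apply Subtype.ext
      show c • p x = 0
      rw [mem_ker.mp hx, smul_zero]
    rw [hσ]
    simp [hm0]
  intro u
  refine ⟨u ∘ₗ LinearMap.codRestrict (ker p) σ hσker, fun x => ?_⟩
  have : (LinearMap.codRestrict (ker p) σ hσker) (x : F) = c • x := by
    apply Subtype.ext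
    show σ (x : F) = ((c • x : ker p) : F)
    rw [hσfix _ x.2]; rfl
  simp only [LinearMap.coe_comp, Function.comp_apply, this, map_smul, smul_eq_mul]


end BoundSection

section Part3

variable {A : Type} [CommRing A]
variable {N : Type} [AddCommGroup N] [Module A N]

/-- The projection from the degree-0 part of a projective resolution. -/
noncomputable def resolutionProj (P : ProjectiveResolution (ModuleCat.of A N)) :
    ↥(P.complex.X 0) →ₗ[A] N :=
  (show P.complex.X 0 ⟶ ModuleCat.of A N from P.π.f 0).hom

theorem resolutionProj_surjective (P : ProjectiveResolution (ModuleCat.of A N)) :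
    Surjective (resolutionProj P) := by
  have : Epi (P.π.f 0) := inferInstance
  exact (ModuleCat.epi_iff_surjective
    (show P.complex.X 0 ⟶ ModuleCat.of A N from P.π.f 0)).mp this

theorem resolutionProj_projective (P : ProjectiveResolution (ModuleCat.of A N)) :
    Module.Projective A ↥(P.complex.X 0) :=
  haveI := P.projective 0; inferInstance

theorem ext1_equiv (P : ProjectiveResolution (ModuleCat.of A N)) :
    Nonempty (((ker (resolutionProj P) →ₗ[A] A) ⧸
        LinearMap.range (LinearMap.lcomp A A (ker (resolutionProj P)).subtype))
      ≃ₗ[A] Ext1 A N) := by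
  classical
  set p := resolutionProj P with hpdef
  set Cx := P.complex.linearYonedaObj A (ModuleCat.of A A) with hCx
  set S' := Cx.sc' 0 1 2 with hS'
  -- exactness at degree 0 : range (d 1 0) = ker (π.f 0)
  have hS₀ : (ShortComplex.mk (P.complex.d 1 0) (P.π.f 0)
      P.complex_d_comp_π_f_zero).Exact :=
    ShortComplex.exact_of_g_is_cokernel _ P.isColimitCokernelCofork
  have hrange0 : LinearMap.range (show ↥(P.complex.X 1) →ₗ[A] ↥(P.complex.X 0) from
      (P.complex.d 1 0).hom) = ker p :=
    hS₀.moduleCat_range_eq_ker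
  -- exactness at degree 1 : range (d 2 1) = ker (d 1 0)
  have hS₁ : (ShortComplex.mk (P.complex.d 2 1) (P.complex.d 1 0)
      (P.complex.d_comp_d 2 1 0)).Exact := P.exact_succ 0
  have hrange1 : LinearMap.range (show ↥(P.complex.X 2) →ₗ[A] ↥(P.complex.X 1) from
      (P.complex.d 2 1).hom) = ker (show ↥(P.complex.X 1) →ₗ[A] ↥(P.complex.X 0) from
      (P.complex.d 1 0).hom) :=
    hS₁.moduleCat_range_eq_ker
  -- the corestriction of d 1 0 to ker p
  have hd0 : ∀ x : ↥(P.complex.X 1),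
      (show ↥(P.complex.X 1) →ₗ[A] ↥(P.complex.X 0) from (P.complex.d 1 0).hom) x ∈ ker p := by
    intro x
    rw [← hrange0]
    exact ⟨x, rfl⟩
  set d10K : ↥(P.complex.X 1) →ₗ[A] ker p :=
    LinearMap.codRestrict (ker p)
      (show ↥(P.complex.X 1) →ₗ[A] ↥(P.complex.X 0) from (P.complex.d 1 0).hom) hd0 with hd10K
  have hd10K_surj : Surjective d10K := by
    rintro ⟨y, hy⟩
    rw [← hrange0] at hy
    obtain ⟨x, hx⟩ := hy
    exact ⟨x, Subtype.ext hx⟩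
  have hker_d10K : ker d10K = LinearMap.range
      (show ↥(P.complex.X 2) →ₗ[A] ↥(P.complex.X 1) from (P.complex.d 2 1).hom) := by
    rw [hd10K, LinearMap.ker_codRestrict, hrange1]
  -- χ₀ : functionals on ker p → cycles
  set raw : (ker p →ₗ[A] A) →ₗ[A] ↑(Cx.X 1) :=
    { toFun := fun w => (show P.complex.X 1 ⟶ ModuleCat.of A A from ModuleCat.ofHom (w ∘ₗ d10K))
      map_add' := fun _ _ => rfl
      map_smul' := fun _ _ => rfl }
      with hraw
  have hmemg : ∀ w : ker p →ₗ[A] A, raw w ∈ ker S'.g.hom := by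
    intro w
    show (show (P.complex.X 2 ⟶ ModuleCat.of A A) from S'.g.hom (raw w)) = 0
    refine ModuleCat.hom_ext (LinearMap.ext fun x => ?_)
    show w (d10K ((show ↥(P.complex.X 2) →ₗ[A] ↥(P.complex.X 1) from (P.complex.d 2 1).hom) x)) = 0
    have hz : d10K ((show ↥(P.complex.X 2) →ₗ[A] ↥(P.complex.X 1) from (P.complex.d 2 1).hom) x)
        = 0 := by
      apply Subtype.ext
      show (show ↥(P.complex.X 1) →ₗ[A] ↥(P.complex.X 0) from (P.complex.d 1 0).hom)
        ((show ↥(P.complex.X 2) →ₗ[A] ↥(P.complex.X 1) from (P.complex.d 2 1).hom) x) = 0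
      exact LinearMap.congr_fun (ModuleCat.hom_ext_iff.mp (P.complex.d_comp_d 2 1 0)) x
    rw [hz, map_zero]
  set χ₀ : (ker p →ₗ[A] A) →ₗ[A] ↥(ker S'.g.hom) :=
    LinearMap.codRestrict (ker S'.g.hom) raw hmemg with hχ₀
  have hχinj : Injective χ₀ := by
    intro w₁ w₂ h
    have h' : raw w₁ = raw w₂ := congrArg Subtype.val h
    ext y
    obtain ⟨x, rfl⟩ := hd10K_surj y
    exact LinearMap.congr_fun (ModuleCat.hom_ext_iff.mp h') x
  have hχsurj : Surjective χ₀ := by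
    rintro ⟨u, hu⟩
    set u' : ↥(P.complex.X 1) →ₗ[A] A :=
      (show P.complex.X 1 ⟶ ModuleCat.of A A from u).hom with hu'
    have hku : ker d10K ≤ ker u' := by
      rw [hker_d10K]
      rintro x ⟨z, rfl⟩
      rw [mem_ker] at hu ⊢
      exact LinearMap.congr_fun (ModuleCat.hom_ext_iff.mp hu) z
    obtain ⟨w, hw⟩ := descend d10K hd10K_surj u' hku
    exact ⟨w, Subtype.ext (ModuleCat.hom_ext (LinearMap.ext fun x => LinearMap.congr_fun hw x))⟩
  set χ : (ker p →ₗ[A] A) ≃ₗ[A] ↥(ker S'.g.hom) := LinearEquiv.ofBijective χ₀ ⟨hχinj, hχsurj⟩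
    with hχ
  have hmap : Submodule.map χ.toLinearMap (LinearMap.range (LinearMap.lcomp A A (ker p).subtype)) =
      LinearMap.range S'.moduleCatToCycles := by
    have h1 : Submodule.map χ.toLinearMap (LinearMap.range (LinearMap.lcomp A A (ker p).subtype)) =
        LinearMap.range (χ₀ ∘ₗ LinearMap.lcomp A A (ker p).subtype) := by
      rw [LinearMap.range_comp]
      rfl
    rw [h1]
    apply le_antisymm
    · rintro _ ⟨g, rfl⟩
      exact ⟨(show P.complex.X 0 ⟶ ModuleCat.of A A from ModuleCat.ofHom g), rfl⟩
    · rintro _ ⟨g, rfl⟩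
      exact ⟨(show P.complex.X 0 ⟶ ModuleCat.of A A from g).hom, rfl⟩
  have equiv1 : ((ker p →ₗ[A] A) ⧸
        LinearMap.range (LinearMap.lcomp A A (ker p).subtype)) ≃ₗ[A]
      (↥(ker S'.g.hom) ⧸ LinearMap.range S'.moduleCatToCycles) :=
    Submodule.Quotient.equiv _ _ χ hmap
  -- the categorical isomorphisms
  have hprev : (ComplexShape.up ℕ).prev 1 = 0 := CochainComplex.prev_nat_succ 0
  have hnext : (ComplexShape.up ℕ).next 1 = 2 := ComplexShape.next_eq' _ (by simp)
  have iso : Ext1 A N ≅ S'.moduleCatLeftHomologyData.H :=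
    P.isoExt 1 (ModuleCat.of A A) ≪≫ Cx.homologyIsoSc' 0 1 2 hprev hnext ≪≫
      S'.moduleCatHomologyIso
  exact ⟨equiv1.trans iso.symm.toLinearEquiv⟩

end Part3

end Stmt4Aux

open Stmt4Aux in
/-- If `N` and its torsion submodule `Tors(N)` are finitely generated over a
commutative integral domain `A`, then there exists a nonzero `α₀ ∈ A` such that the quotient
of `Hom_A(N, A/α₀A)` by the image of the natural map `Hom_A(N, A) → Hom_A(N, A/α₀A)` is
isomorphic, as an `A`-module, to `Ext¹_A(N, A)`. -/
theorem stmt4 (A : Type) [CommRing A] [IsDomain A]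
    (N : Type) [AddCommGroup N] [Module A N] [Module.Finite A N]
    (htors : (Submodule.torsion A N).FG) :
    ∃ α₀ : A, α₀ ≠ 0 ∧
      Nonempty
        (((N →ₗ[A] A ⧸ Ideal.span {α₀}) ⧸
            LinearMap.range
              (LinearMap.llcomp A N A (A ⧸ Ideal.span {α₀}) (Ideal.span {α₀}).mkQ :
                (N →ₗ[A] A) →ₗ[A] N →ₗ[A] A ⧸ Ideal.span {α₀})) ≃ₗ[A]
          Ext1 A N) := by
  classical
  set P : ProjectiveResolution (ModuleCat.of A N) := ProjectiveResolution.of _ with hP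
  haveI hproj : Module.Projective A ↥(P.complex.X 0) := resolutionProj_projective P
  set p := resolutionProj P with hp'
  have hp := resolutionProj_surjective P
  obtain ⟨c, hc, hext⟩ := exists_bound p hp
  obtain ⟨e1⟩ := bridge p hp hc hext
  obtain ⟨e2⟩ := ext1_equiv P
  exact ⟨c, hc, ⟨e1.trans e2⟩⟩
end

section
/- Let A be a unique factorization domain and N a finitely generated torsion A-module whose annihilator ideal Ann(N) is finitely generated. Let a ∈ A \ {0} be a gcd of Ann(N). Let β ∈ A \ {0}, let d be a gcd of a and β, and write β = d·β′. Then every A-linear map f : N → A/βA factors as f = m ∘ g, where g : N → A/dA is A-linear and m : A/dA → A/βA is the injective A-linear map induced by multiplication by β′. -/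
/-- Let `A` be a UFD and `N` a finitely generated torsion `A`-module whose
annihilator ideal is finitely generated, with gcd `a ≠ 0`. Let `β ≠ 0`, `d` a gcd of `a`
and `β`, and `β = d·β′`. Then every `A`-linear map `f : N → A/βA` factors as `f = m ∘ g`
where `g : N → A/dA` is `A`-linear and `m : A/dA → A/βA` is the (injective) `A`-linear map
induced by multiplication by `β′` (characterized by `m(x + dA) = β′x + βA`). -/
theorem stmt6 (A : Type) [CommRing A] [IsDomain A] [UniqueFactorizationMonoid A]
    (N : Type) [AddCommGroup N] [Module A N] [Module.Finite A N]
    (htors : ∀ x : N, ∃ α : A, α ≠ 0 ∧ α • x = 0)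
    (hann : ((⊤ : Submodule A N).annihilator).FG)
    (a : A) (ha : a ≠ 0)
    (ha_dvd : ∀ x ∈ (⊤ : Submodule A N).annihilator, a ∣ x)
    (ha_gcd : ∀ c : A, (∀ x ∈ (⊤ : Submodule A N).annihilator, c ∣ x) → c ∣ a)
    (β : A) (hβ : β ≠ 0)
    (d : A) (hd_a : d ∣ a) (hd_β : d ∣ β)
    (hd_gcd : ∀ c : A, c ∣ a → c ∣ β → c ∣ d)
    (β' : A) (hβ' : β = d * β')
    (f : N →ₗ[A] A ⧸ Ideal.span {β})
    (m : (A ⧸ Ideal.span {d}) →ₗ[A] A ⧸ Ideal.span {β})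
    (hm : ∀ x : A, m ((Ideal.span {d}).mkQ x) = (Ideal.span {β}).mkQ (β' * x)) :
    ∃ g : N →ₗ[A] A ⧸ Ideal.span {d}, f = m ∘ₗ g := by
  classical
  letI := UniqueFactorizationMonoid.normalizationMonoid (α := A)
  letI : NormalizedGCDMonoid A := UniqueFactorizationMonoid.toNormalizedGCDMonoid A
  have hd0 : d ≠ 0 := fun h => hβ (by simp [hβ', h])
  have hβ'0 : β' ≠ 0 := fun h => hβ (by simp [hβ', h])
  obtain ⟨a', ha'⟩ := hd_a
  -- β' and a' are relatively prime
  have hrel : IsRelPrime β' a' := by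
    intro c hc1 hc2
    have h1 : d * c ∣ β := by rw [hβ']; exact mul_dvd_mul_left d hc1
    have h2 : d * c ∣ a := by rw [ha']; exact mul_dvd_mul_left d hc2
    have h3 : d * c ∣ d * 1 := by simpa using hd_gcd _ h2 h1
    exact isUnit_of_dvd_one ((mul_dvd_mul_iff_left hd0).mp h3)
  -- every value of f lies in the range of m
  have hrange : ∀ x : N, f x ∈ LinearMap.range m := by
    intro x
    obtain ⟨r, hr⟩ := Submodule.Quotient.mk_surjective _ (f x)
    obtain ⟨S, hS⟩ := hann
    have hgdvd : ∀ y ∈ (⊤ : Submodule A N).annihilator, S.gcd id ∣ y := by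
      intro y hy
      rw [← hS] at hy
      refine Submodule.span_induction (fun z hz => Finset.gcd_dvd hz) (dvd_zero _)
        (fun _ _ _ _ h1 h2 => dvd_add h1 h2) (fun c z _ h => h.mul_left c) hy
    have hassoc : Associated (S.gcd id) a :=
      associated_of_dvd_dvd (ha_gcd _ hgdvd)
        (Finset.dvd_gcd fun s hs => ha_dvd s (hS ▸ Ideal.subset_span hs))
    -- β divides α * r for each α in the annihilator
    have hdvd_each : ∀ s ∈ S, β ∣ s * r := by
      intro s hs
      have hsann : s ∈ (⊤ : Submodule A N).annihilator := hS ▸ Ideal.subset_span hs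
      have hsx : s • x = 0 := (Submodule.mem_annihilator.mp hsann) x trivial
      have h0 : Submodule.Quotient.mk (p := Ideal.span {β}) (s * r) = 0 := by
        have h1 := congrArg (fun t => s • t) hr
        simp only [← Submodule.Quotient.mk_smul, smul_eq_mul] at h1
        rw [h1, ← map_smul, hsx, map_zero]
      rw [← Ideal.mem_span_singleton]
      exact (Submodule.Quotient.mk_eq_zero _).mp h0
    have hβgcd : β ∣ S.gcd id * normalize r := by
      exact (Finset.dvd_gcd fun s hs => (hdvd_each s hs).trans
        (mul_dvd_mul_left s (normalize_associated r).symm.dvd)).trans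
        (Finset.gcd_mul_right' (s := S) (f := id) (a := normalize r)).dvd
    have hβar : β ∣ a * r := by
      exact hβgcd.trans (mul_dvd_mul hassoc.dvd (normalize_associated r).dvd)
    -- cancel d, use coprimality
    have hβ'r : β' ∣ r := by
      have : d * β' ∣ d * (a' * r) := by
        rw [← hβ']; rw [ha'] at hβar; convert hβar using 1; ring
      exact hrel.dvd_of_dvd_mul_left ((mul_dvd_mul_iff_left hd0).mp this)
    obtain ⟨s, hs⟩ := hβ'r
    refine ⟨(Ideal.span {d}).mkQ s, ?_⟩
    rw [hm s, ← hr, hs, Submodule.mkQ_apply]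
  -- m is injective
  have hinj : Function.Injective m := by
    rw [← LinearMap.ker_eq_bot, eq_bot_iff]
    intro y hy
    obtain ⟨x, rfl⟩ := Submodule.Quotient.mk_surjective _ y
    have h0 : m ((Ideal.span {d}).mkQ x) = 0 := hy
    rw [hm x, Submodule.mkQ_apply] at h0
    have hdvd : β ∣ β' * x :=
      Ideal.mem_span_singleton.mp ((Submodule.Quotient.mk_eq_zero _).mp h0)
    have hdx : d ∣ x := by
      rw [hβ'] at hdvd
      have h2 : β' * d ∣ β' * x := by convert hdvd using 1; ring
      exact (mul_dvd_mul_iff_left hβ'0).mp h2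
    show Submodule.Quotient.mk x = (0 : A ⧸ Ideal.span {d})
    rw [Submodule.Quotient.mk_eq_zero, Ideal.mem_span_singleton]
    exact hdx
  -- build g
  let e := LinearEquiv.ofInjective m hinj
  refine ⟨e.symm.toLinearMap ∘ₗ LinearMap.codRestrict (LinearMap.range m) f hrange, ?_⟩
  ext x
  have key : m (e.symm ⟨f x, hrange x⟩) = f x := by
    have h1 : (↑(e (e.symm ⟨f x, hrange x⟩)) : A ⧸ Ideal.span {β}) = f x := by
      rw [e.apply_symm_apply]
    rwa [LinearEquiv.ofInjective_apply] at h1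
  exact key.symm
end

section
/- Let A be a unique factorization domain and N a finitely generated torsion A-module whose annihilator ideal Ann(N) is finitely generated, and let a ∈ A \ {0} be a gcd of Ann(N). Then for every β ∈ A \ {0} and every A-linear map f : N → A/βA, there exists an A-linear map g : N → A/aA such that m_{β,aβ} ∘ f = m_{a,aβ} ∘ g, where m_{β,aβ} : A/βA → A/aβA is the injective A-linear map induced by multiplication by a and m_{a,aβ} : A/aA → A/aβA is the injective A-linear map induced by multiplication by β. (This expresses that the natural map from Hom_A(N, A/aA) to the colimit of the system (Hom_A(N, A/αA))_{α ∈ A \ {0}}, directed by divisibility, is an isomorphism.) -/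
/-- Let `A` be a UFD and `N` a finitely generated torsion `A`-module whose
annihilator ideal is finitely generated, with gcd `a ≠ 0`. Then for every `β ≠ 0` and every
`A`-linear `f : N → A/βA` there exists an `A`-linear `g : N → A/aA` such that
`m_{β,aβ} ∘ f = m_{a,aβ} ∘ g`, where `m_{β,aβ} : A/βA → A/aβA` is the map induced by
multiplication by `a` (characterized by `x + βA ↦ ax + aβA`) and
`m_{a,aβ} : A/aA → A/aβA` is the map induced by multiplication by `β`
(characterized by `x + aA ↦ βx + aβA`). -/
theorem stmt7 (A : Type) [CommRing A] [IsDomain A] [UniqueFactorizationMonoid A]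
    (N : Type) [AddCommGroup N] [Module A N] [Module.Finite A N]
    (htors : ∀ x : N, ∃ α : A, α ≠ 0 ∧ α • x = 0)
    (hann : ((⊤ : Submodule A N).annihilator).FG)
    (a : A) (ha : a ≠ 0)
    (ha_dvd : ∀ x ∈ (⊤ : Submodule A N).annihilator, a ∣ x)
    (ha_gcd : ∀ c : A, (∀ x ∈ (⊤ : Submodule A N).annihilator, c ∣ x) → c ∣ a)
    (β : A) (hβ : β ≠ 0)
    (f : N →ₗ[A] A ⧸ Ideal.span {β})
    (m₁ : (A ⧸ Ideal.span {β}) →ₗ[A] A ⧸ Ideal.span {a * β})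
    (hm₁ : ∀ x : A, m₁ ((Ideal.span {β}).mkQ x) = (Ideal.span {a * β}).mkQ (a * x))
    (m₂ : (A ⧸ Ideal.span {a}) →ₗ[A] A ⧸ Ideal.span {a * β})
    (hm₂ : ∀ x : A, m₂ ((Ideal.span {a}).mkQ x) = (Ideal.span {a * β}).mkQ (β * x)) :
    ∃ g : N →ₗ[A] A ⧸ Ideal.span {a}, m₁ ∘ₗ f = m₂ ∘ₗ g := by
  classical
  letI : StrongNormalizationMonoid A := UniqueFactorizationMonoid.normalizationMonoid
  letI : StrongNormalizedGCDMonoid A := UniqueFactorizationMonoid.toStrongNormalizedGCDMonoid A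
  obtain ⟨s, hs⟩ := hann
  -- b : gcd of the generators
  set b : A := s.gcd id with hb
  -- b divides a
  have hba : b ∣ a := by
    refine ha_gcd b ?_
    intro x hx
    rw [← hs] at hx
    have : x ∈ Ideal.span ({b} : Set A) := by
      refine Ideal.span_le.mpr (fun r hr => ?_) hx
      exact Ideal.mem_span_singleton.mpr (Finset.gcd_dvd hr)
    rwa [Ideal.mem_span_singleton] at this
  -- m₂ is injective
  have hinj : Function.Injective m₂ := by
    rw [← LinearMap.ker_eq_bot, LinearMap.ker_eq_bot']
    intro q hq
    obtain ⟨x, rfl⟩ := Submodule.mkQ_surjective _ q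
    rw [hm₂] at hq
    rw [Submodule.mkQ_apply, Submodule.Quotient.mk_eq_zero, Ideal.mem_span_singleton] at hq ⊢
    obtain ⟨c, hc⟩ := hq
    refine ⟨c, ?_⟩
    have : β * x = β * (a * c) := by rw [hc]; ring
    exact mul_left_cancel₀ hβ this
  -- key: m₁ (f x) lands in the range of m₂
  have hmem : ∀ x : N, m₁ (f x) ∈ LinearMap.range m₂ := by
    intro x
    obtain ⟨y, hy⟩ := Submodule.mkQ_surjective _ (f x)
    have hry : ∀ r ∈ s, β ∣ r * y := by
      intro r hr
      have hrann : r ∈ (⊤ : Submodule A N).annihilator := by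
        rw [← hs]; exact Ideal.subset_span hr
      have hrx : r • x = 0 := (Submodule.mem_annihilator.mp hrann) x trivial
      have : (Ideal.span ({β} : Set A)).mkQ (r * y) = 0 := by
        rw [← smul_eq_mul, map_smul, hy, ← map_smul, hrx, map_zero]
      rwa [Submodule.mkQ_apply, Submodule.Quotient.mk_eq_zero,
        Ideal.mem_span_singleton] at this
    have hβby : β ∣ b * y := by
      have h1 : β ∣ s.gcd (fun r => id r * y) := Finset.dvd_gcd fun r hr => hry r hr
      rw [Finset.gcd_mul_right] at h1
      exact h1.trans ((Associated.mul_left _ (normalize_associated y)).dvd)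
    have hβay : β ∣ a * y := hβby.trans (mul_dvd_mul_right hba y)
    obtain ⟨z, hz⟩ := hβay
    refine ⟨(Ideal.span ({a} : Set A)).mkQ z, ?_⟩
    rw [hm₂, ← hy, hm₁, hz]
  -- define g
  let e := LinearEquiv.ofInjective m₂ hinj
  refine ⟨e.symm.toLinearMap ∘ₗ (m₁ ∘ₗ f).codRestrict _ hmem, ?_⟩
  ext x
  simp only [LinearMap.comp_apply, LinearEquiv.coe_coe]
  exact (congrArg Subtype.val (e.apply_symm_apply ⟨m₁ (f x), hmem x⟩)).symm
end

section
/- Let A be a unique factorization domain and N a finitely generated torsion A-module whose annihilator ideal Ann(N) is finitely generated, and let a ∈ A \ {0} be a gcd of Ann(N). Then Hom_A(N, A/aA) is isomorphic, as an A-module, to Ext¹_A(N, A). -/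
open CategoryTheory

set_option maxHeartbeats 1000000 in
theorem stmt8_core {A : Type} [CommRing A] [IsDomain A] [UniqueFactorizationMonoid A]
    {N : Type} [AddCommGroup N] [Module A N]
    {a : A} (ha : a ≠ 0)
    (hgcd : ∀ c : A, (∀ β : A, (∀ n : N, β • n = 0) → c ∣ β) → c ∣ a)
    {α₀ : A} (hα₀ : α₀ ≠ 0) (hα₀N : ∀ n : N, α₀ • n = 0)
    {F F₁ F₂ : Type} [AddCommGroup F] [Module A F] [AddCommGroup F₁] [Module A F₁]
    [AddCommGroup F₂] [Module A F₂]
    (π : F →ₗ[A] N) (hπ : Function.Surjective π)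
    (d1 : F₁ →ₗ[A] F) (d2 : F₂ →ₗ[A] F₁)
    (h1 : LinearMap.range d1 = LinearMap.ker π)
    (h2 : LinearMap.range d2 = LinearMap.ker d1)
    (hlift : ∀ h : F →ₗ[A] A ⧸ Ideal.span {a}, ∃ h' : F →ₗ[A] A,
      ((Ideal.span {a} : Submodule A A).mkQ).comp h' = h)
    (G : (F₁ →ₗ[A] A) →ₗ[A] (F₂ →ₗ[A] A)) (hG : ∀ φ, G φ = φ.comp d2)
    (T : (F →ₗ[A] A) →ₗ[A] LinearMap.ker G)
    (hT : ∀ ψ, ((T ψ : F₁ →ₗ[A] A)) = ψ.comp d1) :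
    Nonempty (letI : AddCommGroup (LinearMap.ker G) := Submodule.addCommGroup _
      (N →ₗ[A] A ⧸ Ideal.span {a}) ≃ₗ[A]
      (LinearMap.ker G ⧸ LinearMap.range T)) := by
  classical
  letI : GCDMonoid A := UniqueFactorizationMonoid.toGCDMonoid A
  set q : A →ₗ[A] A ⧸ Ideal.span {a} := (Ideal.span {a} : Submodule A A).mkQ with hq
  -- α₀ • x is in the image of d1
  have hmem : ∀ (β : A), (∀ n : N, β • n = 0) → ∀ x : F, β • x ∈ LinearMap.range d1 := by
    intro β hβ x
    rw [h1, LinearMap.mem_ker, map_smul, hβ]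
  have hyof : ∀ x : F, ∃ y : F₁, d1 y = α₀ • x := fun x => hmem α₀ hα₀N x
  set yof : F → F₁ := fun x => (hyof x).choose with hyofdef
  have hyofs : ∀ x : F, d1 (yof x) = α₀ • x := fun x => (hyof x).choose_spec
  -- maps vanishing on range of d2 only depend on d1-image
  have indep : ∀ (φ : F₁ →ₗ[A] A), φ.comp d2 = 0 → ∀ y y' : F₁, d1 y = d1 y' → φ y = φ y' := by
    intro φ hφ y y' h
    have hy : y - y' ∈ LinearMap.ker d1 := by
      rw [LinearMap.mem_ker, map_sub, h, sub_self]
    rw [← h2] at hy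
    obtain ⟨z, hz⟩ := hy
    have : φ (y - y') = 0 := by
      rw [← hz]
      exact congrFun (congrArg (fun f => f.toFun) hφ) z
    rw [map_sub, sub_eq_zero] at this
    exact this
  -- key divisibility
  have div : ∀ (φ : F₁ →ₗ[A] A), φ.comp d2 = 0 → ∀ x : F, ∃ c : A, a * φ (yof x) = α₀ * c := by
    intro φ hφ x
    suffices h : α₀ ∣ a * φ (yof x) by
      obtain ⟨c, hc⟩ := h
      exact ⟨c, hc⟩
    obtain ⟨α', c', hA, hC, hu⟩ := extract_gcd α₀ (φ (yof x))
    set d := gcd α₀ (φ (yof x)) with hd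
    have hd0 : d ≠ 0 := fun h0 => hα₀ (by rw [hA, h0, zero_mul])
    have hrel : IsRelPrime α' c' := fun e he1 he2 => isUnit_of_dvd_unit (dvd_gcd he1 he2) hu
    have hdvd : α' ∣ a := by
      apply hgcd
      intro β hβ
      obtain ⟨yβ, hyβ⟩ := hmem β hβ x
      have hdd : d1 (β • yof x) = d1 (α₀ • yβ) := by
        rw [map_smul, map_smul, hyofs, hyβ, smul_comm]
      have h3 : β * φ (yof x) = α₀ * φ yβ := by
        have := indep φ hφ _ _ hdd
        simpa [map_smul, smul_eq_mul] using this
      have h4 : β * c' = α' * φ yβ := by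
        apply mul_left_cancel₀ hd0
        rw [hC, hA] at h3
        linear_combination h3
      exact hrel.dvd_of_dvd_mul_right ⟨φ yβ, by linear_combination h4⟩
    obtain ⟨t, ht⟩ := hdvd
    exact ⟨t * c', by rw [hC, ht, hA]; ring⟩
  -- the subtype version
  have hker : ∀ (φ : LinearMap.ker G), ((φ : F₁ →ₗ[A] A)).comp d2 = 0 := by
    intro φ
    have := φ.2
    rwa [LinearMap.mem_ker, hG] at this
  set Ef : LinearMap.ker G → F → A := fun φ x => (div _ (hker φ) x).choose with hEfdef
  have hEf : ∀ (φ : LinearMap.ker G) (x : F),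
      a * (φ : F₁ →ₗ[A] A) (yof x) = α₀ * Ef φ x := fun φ x => (div _ (hker φ) x).choose_spec
  have key : ∀ (φ : LinearMap.ker G) (x : F) (y : F₁), d1 y = α₀ • x →
      a * (φ : F₁ →ₗ[A] A) y = α₀ * Ef φ x := by
    intro φ x y hy
    rw [indep _ (hker φ) y (yof x) (by rw [hy, hyofs])]
    exact hEf φ x
  -- algebraic identities for Ef
  have Ef_add : ∀ (φ : LinearMap.ker G) (x x' : F), Ef φ (x + x') = Ef φ x + Ef φ x' := by
    intro φ x x'
    apply mul_left_cancel₀ hα₀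
    have h := key φ (x + x') (yof x + yof x') (by rw [map_add, hyofs, hyofs, smul_add])
    have hm : (φ : F₁ →ₗ[A] A) (yof x + yof x') =
        (φ : F₁ →ₗ[A] A) (yof x) + (φ : F₁ →ₗ[A] A) (yof x') := map_add _ _ _
    linear_combination -h + a * hm + hEf φ x + hEf φ x'
  have Ef_smul : ∀ (φ : LinearMap.ker G) (r : A) (x : F), Ef φ (r • x) = r * Ef φ x := by
    intro φ r x
    apply mul_left_cancel₀ hα₀
    have h := key φ (r • x) (r • yof x) (by rw [map_smul, hyofs, smul_comm])
    have hm : (φ : F₁ →ₗ[A] A) (r • yof x) = r * (φ : F₁ →ₗ[A] A) (yof x) := by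
      rw [map_smul, smul_eq_mul]
    linear_combination -h + a * hm + r * hEf φ x
  have Ef_addφ : ∀ (φ φ' : LinearMap.ker G) (x : F), Ef (φ + φ') x = Ef φ x + Ef φ' x := by
    intro φ φ' x
    apply mul_left_cancel₀ hα₀
    have h := hEf (φ + φ') x
    have hm : ((φ + φ' : LinearMap.ker G) : F₁ →ₗ[A] A) (yof x) =
        (φ : F₁ →ₗ[A] A) (yof x) + (φ' : F₁ →ₗ[A] A) (yof x) := by
      simp
    linear_combination -h + a * hm + hEf φ x + hEf φ' x
  have Ef_smulφ : ∀ (φ : LinearMap.ker G) (r : A) (x : F), Ef (r • φ) x = r * Ef φ x := by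
    intro φ r x
    apply mul_left_cancel₀ hα₀
    have h := hEf (r • φ) x
    have hm : ((r • φ : LinearMap.ker G) : F₁ →ₗ[A] A) (yof x) =
        r * (φ : F₁ →ₗ[A] A) (yof x) := by
      simp
    linear_combination -h + a * hm + r * hEf φ x
  -- well-definedness modulo a
  have wd : ∀ (φ : LinearMap.ker G) (x x' : F), π x = π x' → q (Ef φ x) = q (Ef φ x') := by
    intro φ x x' hxx
    have hx : x - x' ∈ LinearMap.range d1 := by
      rw [h1, LinearMap.mem_ker, map_sub, hxx, sub_self]
    obtain ⟨z, hz⟩ := hx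
    have h5 : d1 (yof x - yof x') = d1 (α₀ • z) := by
      rw [map_sub, hyofs, hyofs, map_smul, hz, smul_sub]
    have h6 : (φ : F₁ →ₗ[A] A) (yof x) - (φ : F₁ →ₗ[A] A) (yof x')
        = α₀ * (φ : F₁ →ₗ[A] A) z := by
      have := indep _ (hker φ) _ _ h5
      rw [map_sub] at this
      rw [this, map_smul, smul_eq_mul]
    have h7 : Ef φ x - Ef φ x' = a * (φ : F₁ →ₗ[A] A) z := by
      apply mul_left_cancel₀ hα₀
      linear_combination a * h6 - hEf φ x + hEf φ x'
    rw [hq, Submodule.mkQ_apply, Submodule.mkQ_apply, Submodule.Quotient.eq, h7]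
    exact Ideal.mem_span_singleton.2 ⟨(φ : F₁ →ₗ[A] A) z, rfl⟩
  -- section of π
  set sec : N → F := fun n => (hπ n).choose with hsecdef
  have hsec : ∀ n : N, π (sec n) = n := fun n => (hπ n).choose_spec
  -- the main linear map Θ
  set Θ : LinearMap.ker G →ₗ[A] (N →ₗ[A] A ⧸ Ideal.span {a}) :=
    { toFun := fun φ =>
      { toFun := fun n => q (Ef φ (sec n))
        map_add' := by
          intro n n'
          show q (Ef φ (sec (n + n'))) = q (Ef φ (sec n)) + q (Ef φ (sec n'))
          rw [wd φ (sec (n + n')) (sec n + sec n') (by rw [map_add, hsec, hsec, hsec]),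
            Ef_add, map_add]
        map_smul' := by
          intro r n
          show q (Ef φ (sec (r • n))) = r • q (Ef φ (sec n))
          rw [wd φ (sec (r • n)) (r • sec n) (by rw [map_smul, hsec, hsec]),
            Ef_smul, ← smul_eq_mul, map_smul] }
      map_add' := by
        intro φ φ'
        ext n
        simp only [LinearMap.coe_mk, AddHom.coe_mk, LinearMap.add_apply]
        rw [Ef_addφ, map_add]
      map_smul' := by
        intro r φ
        ext n
        simp only [LinearMap.coe_mk, AddHom.coe_mk, RingHom.id_apply, LinearMap.smul_apply]
        rw [Ef_smulφ, ← smul_eq_mul, map_smul] } with hΘ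
  have hΘapp : ∀ (φ : LinearMap.ker G) (n : N), Θ φ n = q (Ef φ (sec n)) := fun _ _ => rfl
  -- kernel of Θ
  have hkerΘ : LinearMap.ker Θ = LinearMap.range T := by
    ext φ
    constructor
    · intro hφ
      rw [LinearMap.mem_ker] at hφ
      have hdvd : ∀ x : F, ∃ u : A, Ef φ x = a * u := by
        intro x
        have h0 : q (Ef φ x) = 0 := by
          rw [wd φ x (sec (π x)) (by rw [hsec])]
          rw [← hΘapp, hφ]
          rfl
        rw [hq, Submodule.mkQ_apply, Submodule.Quotient.mk_eq_zero] at h0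
        exact Ideal.mem_span_singleton.1 h0
      choose u hu using hdvd
      set ψ : F →ₗ[A] A :=
        { toFun := u
          map_add' := by
            intro x x'
            apply mul_left_cancel₀ ha
            rw [← hu, Ef_add, mul_add, hu, hu]
          map_smul' := by
            intro r x
            apply mul_left_cancel₀ ha
            rw [RingHom.id_apply, smul_eq_mul, ← hu, Ef_smul]
            rw [hu]
            ring } with hψ
      refine ⟨ψ, ?_⟩
      apply Subtype.ext
      rw [hT]
      ext y
      apply mul_left_cancel₀ ha
      have h8 : a * (φ : F₁ →ₗ[A] A) (α₀ • y) = α₀ * Ef φ (d1 y) :=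
        key φ (d1 y) (α₀ • y) (by rw [map_smul])
      have h9 : Ef φ (d1 y) = a * (φ : F₁ →ₗ[A] A) y := by
        apply mul_left_cancel₀ hα₀
        rw [← h8, map_smul, smul_eq_mul]
        ring
      show a * ψ (d1 y) = a * (φ : F₁ →ₗ[A] A) y
      rw [show a * ψ (d1 y) = Ef φ (d1 y) from (hu (d1 y)).symm, h9]
    · rintro ⟨ψ, rfl⟩
      rw [LinearMap.mem_ker]
      ext n
      rw [hΘapp]
      have h9 : a * ((T ψ : F₁ →ₗ[A] A)) (yof (sec n)) = α₀ * Ef (T ψ) (sec n) := hEf _ _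
      rw [hT] at h9
      have h10 : Ef (T ψ) (sec n) = a * ψ (sec n) := by
        apply mul_left_cancel₀ hα₀
        rw [← h9, LinearMap.comp_apply, hyofs, map_smul, smul_eq_mul]
        ring
      rw [h10, hq, Submodule.mkQ_apply]
      show Submodule.Quotient.mk (a * ψ (sec n)) = (0 : A ⧸ Ideal.span {a})
      rw [Submodule.Quotient.mk_eq_zero]
      exact Ideal.mem_span_singleton.2 ⟨ψ (sec n), rfl⟩
  -- surjectivity of Θ
  have hsurj : Function.Surjective Θ := by
    intro g
    obtain ⟨h', hh'⟩ := hlift (g.comp π)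
    have hdvd : ∀ y : F₁, ∃ u : A, h' (d1 y) = a * u := by
      intro y
      have hπd : π (d1 y) = 0 := by
        have : d1 y ∈ LinearMap.ker π := h1 ▸ LinearMap.mem_range_self d1 y
        exact this
      have h0 : q (h' (d1 y)) = 0 := by
        have := LinearMap.congr_fun hh' (d1 y)
        simp only [LinearMap.coe_comp, Function.comp_apply] at this
        rw [this, hπd, map_zero]
      rw [hq, Submodule.mkQ_apply, Submodule.Quotient.mk_eq_zero] at h0
      exact Ideal.mem_span_singleton.1 h0
    choose u hu using hdvd
    set φ₀ : F₁ →ₗ[A] A :=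
      { toFun := u
        map_add' := by
          intro y y'
          apply mul_left_cancel₀ ha
          rw [← hu, map_add, map_add, mul_add, hu, hu]
        map_smul' := by
          intro r y
          apply mul_left_cancel₀ ha
          rw [RingHom.id_apply, smul_eq_mul, ← hu, map_smul, map_smul, smul_eq_mul, hu]
          ring } with hφ₀
    have hφ₀ker : G φ₀ = 0 := by
      rw [hG]
      ext z
      show u (d2 z) = 0
      have hd12 : d1 (d2 z) = 0 := by
        have : d2 z ∈ LinearMap.ker d1 := h2 ▸ LinearMap.mem_range_self d2 z
        exact this
      have := hu (d2 z)
      rw [hd12, map_zero] at this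
      rcases mul_eq_zero.1 this.symm with h | h
      · exact absurd h ha
      · exact h
    set Φ : LinearMap.ker G := ⟨φ₀, LinearMap.mem_ker.2 hφ₀ker⟩ with hΦ
    refine ⟨Φ, ?_⟩
    ext n
    rw [hΘapp]
    have h10 : a * (Φ : F₁ →ₗ[A] A) (yof (sec n)) = α₀ * Ef Φ (sec n) :=
      hEf _ _
    have h11 : Ef Φ (sec n) = h' (sec n) := by
      apply mul_left_cancel₀ hα₀
      rw [← h10]
      show a * u (yof (sec n)) = α₀ * h' (sec n)
      rw [← hu, hyofs, map_smul, smul_eq_mul]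
    rw [h11]
    have := LinearMap.congr_fun hh' (sec n)
    simp only [LinearMap.coe_comp, Function.comp_apply] at this
    rw [hq]
    show (Ideal.span {a} : Submodule A A).mkQ (h' (sec n)) = g n
    rw [this, hsec]
  exact ⟨((Submodule.quotEquivOfEq _ _ hkerΘ.symm).trans
    (Θ.quotKerEquivOfSurjective hsurj)).symm⟩

set_option maxHeartbeats 1000000 in
/-- Let `A` be a UFD and `N` a finitely generated torsion `A`-module whose
annihilator ideal is finitely generated, with gcd `a ≠ 0`. Then `Hom_A(N, A/aA)` is
isomorphic, as an `A`-module, to `Ext¹_A(N, A)`. -/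
theorem stmt8 (A : Type) [CommRing A] [IsDomain A] [UniqueFactorizationMonoid A]
    (N : Type) [AddCommGroup N] [Module A N] [Module.Finite A N]
    (htors : ∀ x : N, ∃ α : A, α ≠ 0 ∧ α • x = 0)
    (hann : ((⊤ : Submodule A N).annihilator).FG)
    (a : A) (ha : a ≠ 0)
    (ha_dvd : ∀ x ∈ (⊤ : Submodule A N).annihilator, a ∣ x)
    (ha_gcd : ∀ c : A, (∀ x ∈ (⊤ : Submodule A N).annihilator, c ∣ x) → c ∣ a) :
    Nonempty ((N →ₗ[A] A ⧸ Ideal.span {a}) ≃ₗ[A] Ext1 A N) := by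
  classical
  -- a nonzero annihilating scalar
  have hα : ∃ α₀ : A, α₀ ≠ 0 ∧ ∀ n : N, α₀ • n = 0 := by
    obtain ⟨s, hs⟩ := (Module.Finite.fg_top : (⊤ : Submodule A N).FG)
    choose f hf1 hf2 using htors
    refine ⟨∏ x ∈ s, f x, Finset.prod_ne_zero_iff.2 fun x _ => hf1 x, ?_⟩
    intro n
    have hn : n ∈ Submodule.span A (↑s : Set N) := by rw [hs]; exact Submodule.mem_top
    induction hn using Submodule.span_induction with
    | mem x hx =>
      rw [← Finset.mul_prod_erase s f hx, mul_comm (f x), mul_smul, hf2 x, smul_zero]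
    | zero => rw [smul_zero]
    | add x y _ _ h1 h2 => rw [smul_add, h1, h2, add_zero]
    | smul r x _ h => rw [smul_comm, h, smul_zero]
  obtain ⟨α₀, hα₀, hα₀N⟩ := hα
  have hgcd' : ∀ c : A, (∀ β : A, (∀ n : N, β • n = 0) → c ∣ β) → c ∣ a := by
    intro c hc
    exact ha_gcd c fun x hx => hc x fun n =>
      Submodule.mem_annihilator.1 hx n Submodule.mem_top
  -- projective resolution
  let X : ModuleCat A := ModuleCat.of A N
  let P : CategoryTheory.ProjectiveResolution X := CategoryTheory.ProjectiveResolution.of X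
  let Y : ModuleCat A := ModuleCat.of A A
  let C := P.complex.linearYonedaObj A Y
  let S : CategoryTheory.ShortComplex (ModuleCat A) := C.sc' 0 1 2
  let S' : CategoryTheory.ShortComplex (ModuleCat A) :=
    { X₁ := ModuleCat.of A (↥(P.complex.X 0) →ₗ[A] A)
      X₂ := ModuleCat.of A (↥(P.complex.X 1) →ₗ[A] A)
      X₃ := ModuleCat.of A (↥(P.complex.X 2) →ₗ[A] A)
      f := ModuleCat.ofHom (LinearMap.lcomp A A (P.complex.d 1 0).hom)
      g := ModuleCat.ofHom (LinearMap.lcomp A A (P.complex.d 2 1).hom)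
      zero := by
        ext φ x
        have h : (P.complex.d 1 0).hom ((P.complex.d 2 1).hom x) = 0 := by
          rw [← LinearMap.comp_apply, ← ModuleCat.hom_comp, P.complex.d_comp_d]; rfl
        simp [h] }
  let eSS' : S ≅ S' := CategoryTheory.ShortComplex.isoMk
    (ModuleCat.homLinearEquiv (S := A)).toModuleIso
    (ModuleCat.homLinearEquiv (S := A)).toModuleIso
    (ModuleCat.homLinearEquiv (S := A)).toModuleIso (by ext; rfl) (by ext; rfl)
  have hπs : Function.Surjective (P.π.f 0).hom := by
    rw [← ModuleCat.epi_iff_surjective]; infer_instance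
  have h1 : LinearMap.range (P.complex.d 1 0).hom = LinearMap.ker (P.π.f 0).hom :=
    P.exact₀.moduleCat_range_eq_ker
  have h2 : LinearMap.range (P.complex.d 2 1).hom = LinearMap.ker (P.complex.d 1 0).hom :=
    (P.exact_succ 0).moduleCat_range_eq_ker
  have hlift : ∀ h : ↥(P.complex.X 0) →ₗ[A] A ⧸ Ideal.span {a},
      ∃ h' : ↥(P.complex.X 0) →ₗ[A] A,
        ((Ideal.span {a} : Submodule A A).mkQ).comp h' = h := by
    intro h
    haveI : Module.Projective A ↥(P.complex.X 0) :=
      (IsProjective.iff_projective _).2 (by exact P.projective 0)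
    exact Module.projective_lifting_property
      ((Ideal.span {a} : Submodule A A).mkQ) h (Submodule.mkQ_surjective _)
  obtain ⟨e⟩ := stmt8_core ha hgcd' hα₀ hα₀N
    (π := (P.π.f 0).hom) hπs
    ((P.complex.d 1 0).hom) ((P.complex.d 2 1).hom) h1 h2 hlift
    S'.g.hom (fun φ => rfl) S'.moduleCatToCycles (fun ψ => rfl)
  have e2 : (↥(LinearMap.ker S'.g.hom) ⧸ LinearMap.range S'.moduleCatToCycles) ≃ₗ[A]
      ↥(Ext1 A N) := by
    exact ((P.isoExt 1 Y ≪≫ C.homologyIsoSc' 0 1 2 (by simp) (by simp) ≪≫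
      CategoryTheory.ShortComplex.homologyMapIso eSS' ≪≫
      S'.moduleCatHomologyIso).toLinearEquiv).symm
  exact ⟨e.trans e2⟩
end

section
/- Let A be a commutative integral domain, N an A-module, α, γ ∈ A \ {0}, and let f : N → A/αA be an A-linear map. Let m_γ : A/αA → A/αγA be the injective A-linear map induced by multiplication by γ. If m_γ ∘ f : N → A/αγA lifts to an A-linear map N → A (i.e., equals the post-composition of some h : N → A with the projection A → A/αγA), then f itself lifts to an A-linear map N → A (i.e., f equals the post-composition of some h′ : N → A with the projection A → A/αA). -/
/-- Let `A` be a commutative integral domain, `N` an `A`-module,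
`α, γ ∈ A \ {0}`, `f : N → A/αA` an `A`-linear map, and `m_γ : A/αA → A/αγA` the injective
`A`-linear map induced by multiplication by `γ` (characterized by `x + αA ↦ γx + αγA`).
If `m_γ ∘ f` lifts to an `A`-linear map `N → A` (through the projection `A → A/αγA`),
then `f` lifts to an `A`-linear map `N → A` (through the projection `A → A/αA`). -/
theorem stmt10 (A : Type) [CommRing A] [IsDomain A]
    (N : Type) [AddCommGroup N] [Module A N]
    (α γ : A) (hα : α ≠ 0) (hγ : γ ≠ 0)
    (f : N →ₗ[A] A ⧸ Ideal.span {α})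
    (mγ : (A ⧸ Ideal.span {α}) →ₗ[A] A ⧸ Ideal.span {α * γ})
    (hmγ : ∀ x : A, mγ ((Ideal.span {α}).mkQ x) = (Ideal.span {α * γ}).mkQ (γ * x))
    (hlift : ∃ h : N →ₗ[A] A, mγ ∘ₗ f = (Ideal.span {α * γ}).mkQ ∘ₗ h) :
    ∃ h' : N →ₗ[A] A, f = (Ideal.span {α}).mkQ ∘ₗ h' := by
  obtain ⟨h, hh⟩ := hlift
  have key : ∀ n : N, γ ∣ h n := by
    intro n
    obtain ⟨x, hx⟩ := Submodule.mkQ_surjective (Ideal.span {α}) (f n)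
    have e1 : mγ (f n) = (Ideal.span {α * γ}).mkQ (γ * x) := by
      rw [← hx]; exact hmγ x
    have e2 : (Ideal.span {α * γ}).mkQ (h n) = (Ideal.span {α * γ}).mkQ (γ * x) := by
      rw [← e1]
      exact (LinearMap.congr_fun hh n).symm
    have hmem : h n - γ * x ∈ Ideal.span {α * γ} := by
      rw [Submodule.mkQ_apply, Submodule.mkQ_apply, Submodule.Quotient.eq] at e2
      exact e2
    obtain ⟨k, hk⟩ := Ideal.mem_span_singleton.mp hmem
    exact ⟨x + α * k, by linear_combination hk⟩
  choose g hg using key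
  have hinj : Function.Injective mγ := by
    intro a b hab
    obtain ⟨y, rfl⟩ := Submodule.mkQ_surjective (Ideal.span {α}) a
    obtain ⟨z, rfl⟩ := Submodule.mkQ_surjective (Ideal.span {α}) b
    rw [hmγ, hmγ, Submodule.mkQ_apply, Submodule.mkQ_apply, Submodule.Quotient.eq] at hab
    have hmem : γ * y - γ * z ∈ Ideal.span {α * γ} := hab
    obtain ⟨k, hk⟩ := Ideal.mem_span_singleton.mp hmem
    have : y - z = α * k := mul_left_cancel₀ hγ (by linear_combination hk)
    rw [Submodule.mkQ_apply, Submodule.mkQ_apply, Submodule.Quotient.eq]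
    exact Ideal.mem_span_singleton.mpr ⟨k, this⟩
  refine ⟨{ toFun := g
            map_add' := fun a b => mul_left_cancel₀ hγ ?_
            map_smul' := fun c a => mul_left_cancel₀ hγ ?_ }, ?_⟩
  · rw [← hg, map_add, hg, hg]; ring
  · simp only [RingHom.id_apply, smul_eq_mul]
    rw [← hg, map_smul, smul_eq_mul, hg]; ring
  · apply LinearMap.ext
    intro n
    apply hinj
    show mγ (f n) = mγ ((Ideal.span {α}).mkQ (g n))
    rw [hmγ, ← hg]
    exact LinearMap.congr_fun hh n
end
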